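/- For every m ≥ 2, F_{3m} = F_{3m-2} · F_{3m-5} ⋯ F_7 · F_4 · F_3 · F_4 · F_7 ⋯ F_{3m-5} · F_{3m-2}, i.e., F_{3m} equals the concatenation, for k from m down to 2, of F_{3k-2}, followed by F_3, followed by F_{3k-2} for k from 2 up to m. -/
import Mathlib


/-- The two-letter alphabet: `A` and `B`. -/
inductive Letter : Type
  | A : Letter
  | B : Letter
  deriving DecidableEq, Repr

open Letter

/-- The Fibonacci substitution θ : a → ab, b → a. -/
def theta : Letter → List Letter
  | A => [A, B]
  | B => [A]

/-- Extension of the substitution to words, by concatenation. -/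
def substWord (w : List Letter) : List Letter := w.flatMap theta

/-- The n-th finite Fibonacci word F_n = θ^n(a). -/
def FibWord (n : ℕ) : List Letter := substWord^[n] [A]

/-- The infinite Fibonacci word (each F_n is a prefix of all later ones,
and `FibWord (k+1)` has length `fib (k+3) ≥ k+1`, so index `k` is defined). -/
def FibSeq (k : ℕ) : Letter := (FibWord (k + 1)).getD k A

lemma fibWord_succ (n : ℕ) : FibWord (n + 1) = substWord (FibWord n) :=
  Function.iterate_succ_apply' _ _ _

lemma substWord_append (u v : List Letter) :
    substWord (u ++ v) = substWord u ++ substWord v :=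
  List.flatMap_append ..

lemma fibWord_add_two (n : ℕ) : FibWord (n + 2) = FibWord (n + 1) ++ FibWord n := by
  induction n with
  | zero => rfl
  | succ n ih =>
    rw [show n + 1 + 2 = (n + 2) + 1 from rfl, fibWord_succ, ih, substWord_append,
      ← fibWord_succ, ← fibWord_succ, show n + 1 + 1 = n + 2 from rfl, ih]

lemma fibWord_add_three (n : ℕ) :
    FibWord (n + 3) = FibWord (n + 1) ++ FibWord n ++ FibWord (n + 1) := by
  rw [show n + 3 = (n + 1) + 2 from rfl, fibWord_add_two, fibWord_add_two]

lemma aux (j : ℕ) :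
    FibWord (3 * (j + 2)) =
      (((List.range (j + 1)).map fun i => FibWord (3 * i + 4)).reverse.flatten ++
        FibWord 3) ++
      ((List.range (j + 1)).map fun i => FibWord (3 * i + 4)).flatten := by
  induction j with
  | zero =>
    have := fibWord_add_three 3
    simpa using this
  | succ j ih =>
    have h9 : 3 * (j + 1 + 2) = (3 * (j + 2)) + 3 := by ring
    have h7 : 3 * (j + 2) + 1 = 3 * (j + 1) + 4 := by ring
    rw [h9, fibWord_add_three, h7, ih]
    simp [List.range_succ, List.append_assoc]

/-- Centralised recursive embedding: for m ≥ 2,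
F_{3m} = F_{3m-2} · F_{3m-5} ⋯ F_7 · F_4 · F_3 · F_4 · F_7 ⋯ F_{3m-5} · F_{3m-2},
the concatenation of F_{3k-2} for k from m down to 2, then F_3, then
F_{3k-2} for k from 2 up to m. -/
theorem fib_word_centralised_embedding (m : ℕ) (hm : 2 ≤ m) :
    FibWord (3 * m) =
      (((List.range (m - 1)).map fun i => FibWord (3 * (m - i) - 2)).flatten ++
        FibWord 3) ++
      ((List.range (m - 1)).map fun i => FibWord (3 * (i + 2) - 2)).flatten := by
  obtain ⟨j, rfl⟩ : ∃ j, m = j + 2 := ⟨m - 2, by omega⟩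
  have hleft : ((List.range (j + 2 - 1)).map fun i => FibWord (3 * (j + 2 - i) - 2)) =
      ((List.range (j + 1)).map fun i => FibWord (3 * i + 4)).reverse := by
    apply List.ext_getElem
    · simp
    · intro i h1 h2
      simp only [List.getElem_map, List.getElem_range, List.getElem_reverse,
        List.length_map, List.length_range]
      congr 1
      simp at h1
      omega
  have hright : ((List.range (j + 2 - 1)).map fun i => FibWord (3 * (i + 2) - 2)) =
      ((List.range (j + 1)).map fun i => FibWord (3 * i + 4)) := by
    apply List.map_congr_left
    intro i _
    congr 1
  rw [hleft, hright, ← aux]
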